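/- arXiv:2402.09549 — 2 statements merged into one kernel-verified Lean document; each statement's English description precedes it below -/
import Mathlib

section
/- Assume (A2). If M is a menu with M ⊆ M_NSR, then M = M_NSR. (Consequently, every no-swap-regret learning algorithm has the same asymptotic menu, namely M_NSR.) -/
open Finset

noncomputable section

/-- The product CSP `x ⊗ y`. -/
def prodCSP {m n : ℕ} (x : Fin m → ℝ) (y : Fin n → ℝ) : Fin m × Fin n → ℝ :=
  fun p => x p.1 * y p.2

/-- The `j`-th vertex `e_j` of a simplex. -/
def pureVec {k : ℕ} (j : Fin k) : Fin k → ℝ := fun j' => if j' = j then 1 else 0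

/-- Linear extension of a payoff to CSPs. -/
def linCSP {m n : ℕ} (u : Fin m → Fin n → ℝ) (φ : Fin m × Fin n → ℝ) : ℝ :=
  ∑ p : Fin m × Fin n, φ p * u p.1 p.2

/-- Payoff the learner would get by always deviating to the pure action `j'`. -/
def devCSP {m n : ℕ} (u : Fin m → Fin n → ℝ) (φ : Fin m × Fin n → ℝ) (j' : Fin n) : ℝ :=
  ∑ p : Fin m × Fin n, φ p * u p.1 j'

/-- Bilinear extension of a payoff to mixed strategies. -/
def mixPay {m n : ℕ} (u : Fin m → Fin n → ℝ) (x : Fin m → ℝ) (y : Fin n → ℝ) : ℝ :=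
  ∑ i, ∑ j, x i * y j * u i j

/-- Pure best responses of the learner to the optimizer mixed strategy `x`. -/
def BRL {m n : ℕ} (u : Fin m → Fin n → ℝ) (x : Fin m → ℝ) : Set (Fin n) :=
  {j | ∀ j' : Fin n, (∑ i, x i * u i j') ≤ ∑ i, x i * u i j}

/-- A CSP is no-regret. -/
def NoRegret {m n : ℕ} (u : Fin m → Fin n → ℝ) (φ : Fin m × Fin n → ℝ) : Prop :=
  ∀ j' : Fin n, devCSP u φ j' ≤ linCSP u φ

/-- A CSP is no-swap-regret. -/
def NoSwapRegret {m n : ℕ} (u : Fin m → Fin n → ℝ) (φ : Fin m × Fin n → ℝ) : Prop :=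
  ∀ j j' : Fin n, (∑ i, φ (i, j) * u i j') ≤ ∑ i, φ (i, j) * u i j

/-- The no-regret menu: all no-regret CSPs. -/
def MNR {m n : ℕ} (u : Fin m → Fin n → ℝ) : Set (Fin m × Fin n → ℝ) :=
  {φ | φ ∈ stdSimplex ℝ (Fin m × Fin n) ∧ NoRegret u φ}

/-- The no-swap-regret menu: all no-swap-regret CSPs. -/
def MNSR {m n : ℕ} (u : Fin m → Fin n → ℝ) : Set (Fin m × Fin n → ℝ) :=
  {φ | φ ∈ stdSimplex ℝ (Fin m × Fin n) ∧ NoSwapRegret u φ}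

/-- A menu: a closed convex subset of the simplex of CSPs such that every optimizer
mixed strategy has some product response inside the set. -/
def IsMenu {m n : ℕ} (M : Set (Fin m × Fin n → ℝ)) : Prop :=
  IsClosed M ∧ Convex ℝ M ∧ M ⊆ stdSimplex ℝ (Fin m × Fin n) ∧
    ∀ x ∈ stdSimplex ℝ (Fin m), ∃ y ∈ stdSimplex ℝ (Fin n), prodCSP x y ∈ M

/-- The learner's value when the optimizer with payoff `uO` picks their favorite point
of the menu `M`, breaking ties in the learner's favor. -/
def VL {m n : ℕ} (uL uO : Fin m → Fin n → ℝ) (M : Set (Fin m × Fin n → ℝ)) : ℝ :=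
  sSup (linCSP uL '' {φ ∈ M | ∀ ψ ∈ M, linCSP uO ψ ≤ linCSP uO φ})

/-- `M'` Pareto-dominates `M` (for the learner payoff `uL`). -/
def ParetoDominates {m n : ℕ} (uL : Fin m → Fin n → ℝ)
    (M' M : Set (Fin m × Fin n → ℝ)) : Prop :=
  (∀ uO : Fin m → Fin n → ℝ, VL uL uO M ≤ VL uL uO M') ∧
    ∃ uO : Fin m → Fin n → ℝ, VL uL uO M < VL uL uO M'

/-- A menu is Pareto-optimal if it is a menu and no menu Pareto-dominates it. -/
def ParetoOptimal {m n : ℕ} (uL : Fin m → Fin n → ℝ) (M : Set (Fin m × Fin n → ℝ)) : Prop :=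
  IsMenu M ∧ ∀ M' : Set (Fin m × Fin n → ℝ), IsMenu M' → ¬ ParetoDominates uL M' M

/-- (A2): no weakly dominated learner actions. -/
def A2cond {m n : ℕ} (u : Fin m → Fin n → ℝ) : Prop :=
  ∀ j : Fin n, (∃ x ∈ stdSimplex ℝ (Fin m), j ∈ BRL u x) →
    ∃ x' ∈ stdSimplex ℝ (Fin m), BRL u x' = {j}

/-- `U^-(M)`: the minimal learner utility over `M`. -/
def UminusVal {m n : ℕ} (u : Fin m → Fin n → ℝ) (M : Set (Fin m × Fin n → ℝ)) : ℝ :=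
  sInf (linCSP u '' M)

/-- `U^+(M)`: the maximal learner utility over `M`. -/
def UplusVal {m n : ℕ} (u : Fin m → Fin n → ℝ) (M : Set (Fin m × Fin n → ℝ)) : ℝ :=
  sSup (linCSP u '' M)

/-- `M^-`: the set of learner-utility-minimizing points of `M`. -/
def MminusSet {m n : ℕ} (u : Fin m → Fin n → ℝ) (M : Set (Fin m × Fin n → ℝ)) :
    Set (Fin m × Fin n → ℝ) :=
  {φ ∈ M | linCSP u φ = UminusVal u M}

/-- `M^+`: the set of learner-utility-maximizing points of `M`. -/
def MplusSet {m n : ℕ} (u : Fin m → Fin n → ℝ) (M : Set (Fin m × Fin n → ℝ)) :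
    Set (Fin m × Fin n → ℝ) :=
  {φ ∈ M | linCSP u φ = UplusVal u M}

/-- The zero-sum value `U_ZS = min_x max_y u_L(x,y)`. -/
def UZSval {m n : ℕ} (u : Fin m → Fin n → ℝ) : ℝ :=
  sInf ((fun x => sSup ((fun y => mixPay u x y) '' stdSimplex ℝ (Fin n))) ''
    stdSimplex ℝ (Fin m))

/-!
Every no-swap-regret CSP splits along the learner's actions as `φ = ∑ⱼ cⱼ · (xⱼ ⊗ eⱼ)`, where
`cⱼ` is the mass of column `j` and `j` is a best response to the conditional `xⱼ`; so `M_NSR` is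
the convex hull of the points `x ⊗ eⱼ` with `j ∈ BR_L(x)`, and it suffices to put those into `M`.
If `BR_L(x) = {j}`, the menu offers some `x ⊗ y ∈ M ⊆ M_NSR`, and no swap regret forces `y`
onto best responses to `x`, i.e. `y = eⱼ`. For a general `j ∈ BR_L(x)`, (A2) gives `x'` with
`BR_L(x') = {j}`, every point `z` strictly between `x` and `x'` still has `BR_L(z) = {j}`, and
closedness of `M` lets `z` tend to `x`.
-/

variable {m n : ℕ}

section BestResponse

variable {u : Fin m → Fin n → ℝ}

lemma mem_BRL_of_noSwapRegret_prodCSP {x : Fin m → ℝ} {y : Fin n → ℝ}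
    (h : NoSwapRegret u (prodCSP x y)) {j : Fin n} (hj : 0 < y j) : j ∈ BRL u x := by
  have hcol : ∀ k, ∑ i, prodCSP x y (i, j) * u i k = y j * ∑ i, x i * u i k := fun k => by
    rw [Finset.mul_sum]
    exact Finset.sum_congr rfl fun i _ => by simp only [prodCSP]; ring
  intro k
  exact le_of_mul_le_mul_left (by simpa only [hcol] using h j k) hj

lemma sum_smul_add_smul_mul (u : Fin m → Fin n → ℝ) (x x' : Fin m → ℝ) (a b : ℝ) (k : Fin n) :
    ∑ i, (a • x + b • x') i * u i k = a * ∑ i, x i * u i k + b * ∑ i, x' i * u i k := by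
  simp only [Pi.add_apply, Pi.smul_apply, smul_eq_mul, add_mul, Finset.sum_add_distrib,
    Finset.mul_sum, mul_assoc]

lemma BRL_eq_singleton_of_mem_openSegment {x x' z : Fin m → ℝ} {j : Fin n}
    (hx : j ∈ BRL u x) (hx' : BRL u x' = {j}) (hz : z ∈ openSegment ℝ x x') :
    BRL u z = {j} := by
  obtain ⟨a, b, ha, hb, -, rfl⟩ := hz
  have hj' : j ∈ BRL u x' := hx' ▸ rfl
  refine Set.eq_singleton_iff_unique_mem.2 ⟨fun k => ?_, fun k hk => ?_⟩
  · rw [sum_smul_add_smul_mul, sum_smul_add_smul_mul]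
    exact add_le_add (mul_le_mul_of_nonneg_left (hx k) ha.le)
      (mul_le_mul_of_nonneg_left (hj' k) hb.le)
  · rw [← Set.mem_singleton_iff, ← hx']
    have hkj := hk j
    rw [sum_smul_add_smul_mul, sum_smul_add_smul_mul] at hkj
    have hjk := hx k
    exact fun k' => (hj' k').trans (by nlinarith)

end BestResponse

lemma eq_pureVec_of_pos_imp_eq {y : Fin n → ℝ} (hy : y ∈ stdSimplex ℝ (Fin n)) {j : Fin n}
    (h : ∀ k, 0 < y k → k = j) : y = pureVec j := by
  have hzero : ∀ k, k ≠ j → y k = 0 := fun k hk =>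
    le_antisymm (not_lt.1 (mt (h k) hk)) (hy.1 k)
  have hj : y j = 1 := by
    rw [← hy.2, Finset.sum_eq_single j (fun k _ hk => hzero k hk) (by simp)]
  funext k
  by_cases hk : k = j
  · subst hk; simp [pureVec, hj]
  · simp [pureVec, hk, hzero k hk]

section Menu

variable {u : Fin m → Fin n → ℝ} {M : Set (Fin m × Fin n → ℝ)}

lemma prodCSP_pureVec_mem_of_BRL_eq_singleton (hM : IsMenu M) (hsub : M ⊆ MNSR u)
    {x : Fin m → ℝ} (hx : x ∈ stdSimplex ℝ (Fin m)) {j : Fin n} (hBR : BRL u x = {j}) :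
    prodCSP x (pureVec j) ∈ M := by
  obtain ⟨y, hy, hyM⟩ := hM.2.2.2 x hx
  have hyj : y = pureVec j := eq_pureVec_of_pos_imp_eq hy fun k hk => by
    simpa [hBR] using mem_BRL_of_noSwapRegret_prodCSP (hsub hyM).2 hk
  exact hyj ▸ hyM

lemma prodCSP_pureVec_mem_of_mem_BRL (hA2 : A2cond u) (hM : IsMenu M) (hsub : M ⊆ MNSR u)
    {x : Fin m → ℝ} (hx : x ∈ stdSimplex ℝ (Fin m)) {j : Fin n} (hj : j ∈ BRL u x) :
    prodCSP x (pureVec j) ∈ M := by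
  obtain ⟨x', hx', hBR'⟩ := hA2 j ⟨x, hx, hj⟩
  have hclosed : IsClosed {z : Fin m → ℝ | prodCSP z (pureVec j) ∈ M} :=
    hM.1.preimage (continuous_pi fun p => (continuous_apply p.1).mul continuous_const)
  have hseg : openSegment ℝ x x' ⊆ {z | prodCSP z (pureVec j) ∈ M} := fun z hz =>
    prodCSP_pureVec_mem_of_BRL_eq_singleton hM hsub
      ((convex_stdSimplex ℝ (Fin m)).openSegment_subset hx hx' hz)
      (BRL_eq_singleton_of_mem_openSegment hj hBR' hz)
  have hsegment := hclosed.closure_subset_iff.2 hseg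
  rw [closure_openSegment] at hsegment
  exact hsegment (left_mem_segment ℝ x x')

end Menu

section Decomposition

variable (φ : Fin m × Fin n → ℝ)

def columnMass (j : Fin n) : ℝ := ∑ i, φ (i, j)

/-- Junk value `0` when the column has mass `0`. -/
def columnConditional (j : Fin n) : Fin m → ℝ := fun i => φ (i, j) / columnMass φ j

variable {φ}

lemma sum_columnMass : ∑ j, columnMass φ j = ∑ p, φ p := by
  rw [Fintype.sum_prod_type, Finset.sum_comm]
  rfl

lemma columnConditional_mem_stdSimplex (hφ : ∀ p, 0 ≤ φ p) {j : Fin n}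
    (hj : 0 < columnMass φ j) : columnConditional φ j ∈ stdSimplex ℝ (Fin m) := by
  refine ⟨fun i => div_nonneg (hφ _) hj.le, ?_⟩
  simp only [columnConditional, ← Finset.sum_div]
  exact div_self hj.ne'

lemma mem_BRL_columnConditional {u : Fin m → Fin n → ℝ} (h : NoSwapRegret u φ) {j : Fin n}
    (hj : 0 < columnMass φ j) : j ∈ BRL u (columnConditional φ j) := by
  intro k
  simp only [columnConditional, div_mul_eq_mul_div, ← Finset.sum_div]
  exact div_le_div_of_nonneg_right (h j k) hj.le

lemma sum_columnMass_smul_prodCSP (hφ : ∀ p, 0 ≤ φ p) :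
    ∑ j, columnMass φ j • prodCSP (columnConditional φ j) (pureVec j) = φ := by
  funext ⟨i, k⟩
  simp only [Finset.sum_apply, Pi.smul_apply, prodCSP, columnConditional, pureVec, mul_ite,
    mul_one, mul_zero, smul_eq_mul, sum_ite_eq, mem_univ, ↓reduceIte]
  exact mul_div_cancel_of_imp' fun h =>
    (Finset.sum_eq_zero_iff_of_nonneg fun i _ => hφ (i, k)).1 h i (Finset.mem_univ i)

end Decomposition

def pureBestResponseCSPs (u : Fin m → Fin n → ℝ) : Set (Fin m × Fin n → ℝ) :=
  {φ | ∃ x ∈ stdSimplex ℝ (Fin m), ∃ j ∈ BRL u x, prodCSP x (pureVec j) = φ}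

lemma MNSR_subset_convexHull (u : Fin m → Fin n → ℝ) :
    MNSR u ⊆ convexHull ℝ (pureBestResponseCSPs u) := by
  rintro φ ⟨⟨hφ0, hφ1⟩, hφ⟩
  rw [← sum_columnMass_smul_prodCSP hφ0, ← finsum_eq_sum_of_fintype]
  refine (convex_convexHull ℝ _).finsum_mem
    (fun j => Finset.sum_nonneg fun i _ => hφ0 _)
    (by rw [finsum_eq_sum_of_fintype, sum_columnMass, hφ1]) fun j hj => subset_convexHull ℝ _ ?_
  have hpos : 0 < columnMass φ j :=
    (Finset.sum_nonneg fun i _ => hφ0 (i, j)).lt_of_ne' hj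
  exact ⟨_, columnConditional_mem_stdSimplex hφ0 hpos, j, mem_BRL_columnConditional hφ hpos, rfl⟩

theorem menu_subset_nsr_eq_nsr_general
    (m n : ℕ)
    (uL : Fin m → Fin n → ℝ)
    (hA2 : A2cond uL)
    (M : Set (Fin m × Fin n → ℝ)) (hM : IsMenu M) (hsub : M ⊆ MNSR uL) :
    M = MNSR uL :=
  hsub.antisymm <| (MNSR_subset_convexHull uL).trans <| hM.2.1.convexHull_subset_iff.2
    fun _ ⟨_, hx, _, hj, hφ⟩ => hφ ▸ prodCSP_pureVec_mem_of_mem_BRL hA2 hM hsub hx hj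

/-- Assume (A2). Any menu contained in the no-swap-regret menu equals it
(so all no-swap-regret learning algorithms have the same asymptotic menu `M_NSR`). -/
theorem menu_subset_nsr_eq_nsr
    (m n : ℕ) (hm : 0 < m) (hn : 0 < n)
    (uL : Fin m → Fin n → ℝ) (hbound : ∀ i j, uL i j ∈ Set.Icc (-1 : ℝ) 1)
    (hA2 : A2cond uL)
    (M : Set (Fin m × Fin n → ℝ)) (hM : IsMenu M) (hsub : M ⊆ MNSR uL) :
    M = MNSR uL :=
  menu_subset_nsr_eq_nsr_general m n uL hA2 M hM hsub
end
end

section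
/- Assume (A1) and (A2). Let M1 be a menu with M1 ⊆ M_NR, and let M2 be a menu with M2 ⊄ M_NR. Then M2 does not Pareto-dominate M1. -/
open Finset

noncomputable section

/-!
Let `j` be the action towards which `M2` has the largest regret `ρ > 0`, over all its points
and all actions. The optimizer payoff `u_O = A (u_L(·, j) - u_L) + u_L` rewards regret towards `j`.
In the no-regret menu `M1` the optimizer can reach every `x ⊗ y` with `j ∈ BR_L(x)`, where
`u_O = u_L = u_L(x, j)`, so `V_L(M1, u_O) ≥ u_L(x, j)` for every such `x`. In `M2` every
`u_O`-optimal point `φ` has regret at least `ρ - 2/A` towards `j`, so `j` is a `2/A`-best response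
to the marginal `x` of `φ`. By (A2), mixing `x` with a strategy to which `j` is the unique best
response yields an exact best response with almost the same payoff, so
`u_L(φ) = u_L(x, j) - regret ≤ V_L(M1, u_O) + ε - ρ + 2/A < V_L(M1, u_O)` for large `A`.
-/

open Matrix

section Regret

variable {m n : ℕ}

def regret (u : Fin m → Fin n → ℝ) (φ : Fin m × Fin n → ℝ) (j : Fin n) : ℝ :=
  devCSP u φ j - linCSP u φ

def marginal (φ : Fin m × Fin n → ℝ) : Fin m → ℝ := fun i => ∑ j, φ (i, j)

def tiltToward (u : Fin m → Fin n → ℝ) (A : ℝ) (j : Fin n) : Fin m → Fin n → ℝ :=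
  fun i k => A * (u i j - u i k) + u i k

variable {u : Fin m → Fin n → ℝ}

lemma mem_BRL_iff {x : Fin m → ℝ} {j : Fin n} :
    j ∈ BRL u x ↔ ∀ k, (x ᵥ* u) k ≤ (x ᵥ* u) j :=
  Iff.rfl

lemma continuous_linCSP (u : Fin m → Fin n → ℝ) : Continuous (linCSP u) :=
  continuous_finsetSum _ fun p _ => (continuous_apply p).mul continuous_const

lemma continuous_regret (u : Fin m → Fin n → ℝ) :
    Continuous fun p : (Fin m × Fin n → ℝ) × Fin n => regret u p.1 p.2 :=
  continuous_prod_of_discrete_right.2 fun j => by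
    simp only [regret, devCSP, linCSP]
    fun_prop

lemma sum_mul_mem_Icc_of_mem_stdSimplex {ι : Type*} [Fintype ι] {w f : ι → ℝ} {a b : ℝ}
    (hw : w ∈ stdSimplex ℝ ι) (hf : ∀ i, f i ∈ Set.Icc a b) : ∑ i, w i * f i ∈ Set.Icc a b :=
  (convex_Icc a b).sum_mem (fun i _ => hw.1 i) hw.2 fun i _ => hf i

lemma vecMul_mem_Icc (hu : ∀ i j, u i j ∈ Set.Icc (-1 : ℝ) 1) {x : Fin m → ℝ}
    (hx : x ∈ stdSimplex ℝ (Fin m)) (j : Fin n) : (x ᵥ* u) j ∈ Set.Icc (-1 : ℝ) 1 :=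
  sum_mul_mem_Icc_of_mem_stdSimplex hx fun i => hu i j

lemma linCSP_mem_Icc (hu : ∀ i j, u i j ∈ Set.Icc (-1 : ℝ) 1) {φ : Fin m × Fin n → ℝ}
    (hφ : φ ∈ stdSimplex ℝ (Fin m × Fin n)) : linCSP u φ ∈ Set.Icc (-1 : ℝ) 1 :=
  sum_mul_mem_Icc_of_mem_stdSimplex hφ fun p => hu p.1 p.2

lemma marginal_mem_stdSimplex {φ : Fin m × Fin n → ℝ} (hφ : φ ∈ stdSimplex ℝ (Fin m × Fin n)) :
    marginal φ ∈ stdSimplex ℝ (Fin m) :=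
  ⟨fun i => Finset.sum_nonneg fun j _ => hφ.1 (i, j), (Fintype.sum_prod_type φ).symm.trans hφ.2⟩

lemma devCSP_eq_vecMul_marginal (u : Fin m → Fin n → ℝ) (φ : Fin m × Fin n → ℝ) (j : Fin n) :
    devCSP u φ j = (marginal φ ᵥ* u) j := by
  simp only [devCSP, marginal, vecMul, dotProduct, Fintype.sum_prod_type, Finset.sum_mul]

lemma regret_sub_regret (u : Fin m → Fin n → ℝ) (φ : Fin m × Fin n → ℝ) (k j : Fin n) :
    regret u φ k - regret u φ j = (marginal φ ᵥ* u) k - (marginal φ ᵥ* u) j := by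
  simp only [regret, devCSP_eq_vecMul_marginal]
  ring

lemma devCSP_prodCSP (u : Fin m → Fin n → ℝ) (x : Fin m → ℝ) {y : Fin n → ℝ}
    (hy : ∑ k, y k = 1) (j : Fin n) : devCSP u (prodCSP x y) j = (x ᵥ* u) j := by
  simp only [devCSP, prodCSP, vecMul, dotProduct, Fintype.sum_prod_type, mul_right_comm _ _ (u _ j),
    ← Finset.mul_sum, hy, mul_one]

lemma linCSP_prodCSP (u : Fin m → Fin n → ℝ) (x : Fin m → ℝ) (y : Fin n → ℝ) :
    linCSP u (prodCSP x y) = y ⬝ᵥ (x ᵥ* u) := by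
  simp only [linCSP, prodCSP, vecMul, dotProduct, Fintype.sum_prod_type, Finset.mul_sum]
  rw [Finset.sum_comm]
  exact Finset.sum_congr rfl fun _ _ => Finset.sum_congr rfl fun _ _ => by ring

lemma regret_prodCSP_nonneg {x : Fin m → ℝ} {y : Fin n → ℝ} (hy : y ∈ stdSimplex ℝ (Fin n))
    {j : Fin n} (hj : j ∈ BRL u x) : 0 ≤ regret u (prodCSP x y) j := by
  have : y ⬝ᵥ (x ᵥ* u) ≤ (x ᵥ* u) j :=
    calc y ⬝ᵥ (x ᵥ* u) ≤ ∑ k, y k * (x ᵥ* u) j :=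
          Finset.sum_le_sum fun k _ => mul_le_mul_of_nonneg_left (hj k) (hy.1 k)
      _ = (x ᵥ* u) j := by rw [← Finset.sum_mul, hy.2, one_mul]
  rw [regret, devCSP_prodCSP u x hy.2, linCSP_prodCSP]
  linarith

lemma linCSP_tiltToward (u : Fin m → Fin n → ℝ) (A : ℝ) (j : Fin n) (φ : Fin m × Fin n → ℝ) :
    linCSP (tiltToward u A j) φ = A * regret u φ j + linCSP u φ := by
  simp only [linCSP, devCSP, regret, tiltToward, Finset.mul_sum, ← Finset.sum_sub_distrib,
    ← Finset.sum_add_distrib]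
  exact Finset.sum_congr rfl fun _ _ => by ring

end Regret

section Menus

variable {m n : ℕ}

lemma IsMenu.isCompact {M : Set (Fin m × Fin n → ℝ)} (hM : IsMenu M) : IsCompact M :=
  (isCompact_stdSimplex ℝ _).of_isClosed_subset hM.1 hM.2.2.1

lemma le_VL {uL uO : Fin m → Fin n → ℝ} {M : Set (Fin m × Fin n → ℝ)} (hM : IsCompact M)
    {ψ : Fin m × Fin n → ℝ} (hψ : ψ ∈ M) (hmax : ∀ φ ∈ M, linCSP uO φ ≤ linCSP uO ψ) :
    linCSP uL ψ ≤ VL uL uO M :=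
  le_csSup ((hM.image (continuous_linCSP uL)).bddAbove.mono (Set.image_mono (Set.sep_subset _ _)))
    ⟨ψ, ⟨hψ, hmax⟩, rfl⟩

lemma VL_le {uL uO : Fin m → Fin n → ℝ} {M : Set (Fin m × Fin n → ℝ)} (hM : IsCompact M)
    (hne : M.Nonempty) {c : ℝ}
    (h : ∀ φ ∈ M, (∀ ψ ∈ M, linCSP uO ψ ≤ linCSP uO φ) → linCSP uL φ ≤ c) : VL uL uO M ≤ c := by
  obtain ⟨φ, hφ, hmax⟩ := hM.exists_isMaxOn hne (continuous_linCSP uO).continuousOn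
  refine csSup_le ⟨_, ⟨φ, ⟨hφ, fun ψ hψ => hmax hψ⟩, rfl⟩⟩ ?_
  rintro _ ⟨φ', ⟨hφ', hmax'⟩, rfl⟩
  exact h φ' hφ' hmax'

lemma exists_max_regret {u : Fin m → Fin n → ℝ} {M : Set (Fin m × Fin n → ℝ)}
    (hM : IsCompact M) (hsub : M ⊆ stdSimplex ℝ (Fin m × Fin n)) (hnot : ¬ M ⊆ MNR u) :
    ∃ j, ∃ φs ∈ M, 0 < regret u φs j ∧ ∀ φ ∈ M, ∀ k, regret u φ k ≤ regret u φs j := by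
  obtain ⟨φ₀, hφ₀, hφ₀NR⟩ := Set.not_subset.1 hnot
  obtain ⟨j₀, hj₀⟩ : ∃ j₀, linCSP u φ₀ < devCSP u φ₀ j₀ := by
    simpa [MNR, NoRegret, hsub hφ₀] using hφ₀NR
  obtain ⟨⟨φs, j⟩, ⟨hφs, -⟩, hmax⟩ := (hM.prod isCompact_univ).exists_isMaxOn
    ⟨(φ₀, j₀), hφ₀, Set.mem_univ _⟩ (continuous_regret u).continuousOn
  refine ⟨j, φs, hφs, ?_, fun φ hφ k => hmax (Set.mk_mem_prod hφ (Set.mem_univ k))⟩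
  have h₀ : regret u φ₀ j₀ ≤ regret u φs j := hmax (Set.mk_mem_prod hφ₀ (Set.mem_univ j₀))
  unfold regret at h₀ ⊢
  linarith

end Menus

section BestResponse

variable {m n : ℕ} {u : Fin m → Fin n → ℝ}

lemma exists_pos_gap_of_BRL_eq_singleton {x : Fin m → ℝ} {j : Fin n} (h : BRL u x = {j}) :
    ∃ μ > 0, ∀ k ≠ j, (x ᵥ* u) k + μ ≤ (x ᵥ* u) j := by
  have hgap : ∀ k ≠ j, (x ᵥ* u) k < (x ᵥ* u) j := fun k hk => by
    have hjBR : j ∈ BRL u x := h ▸ rfl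
    have hkBR : k ∉ BRL u x := by simpa [h] using hk
    obtain ⟨k', hk'⟩ : ∃ k', (x ᵥ* u) k < (x ᵥ* u) k' := by simpa [mem_BRL_iff] using hkBR
    exact hk'.trans_le (hjBR k')
  have : ∀ᶠ μ in nhdsWithin (0 : ℝ) (Set.Ioi 0), 0 < μ ∧ ∀ k ≠ j, (x ᵥ* u) k + μ ≤ (x ᵥ* u) j :=
    eventually_mem_nhdsWithin.and <| Filter.eventually_all.2 fun k =>
      if hk : k = j then Filter.Eventually.of_forall fun _ h => (h hk).elim
      else ((eventually_le_nhds (sub_pos.2 (hgap k hk))).filter_mono nhdsWithin_le_nhds).mono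
        fun μ hμ _ => by linarith
  exact this.exists

lemma exists_mem_BRL_near_of_approx (hu : ∀ i j, u i j ∈ Set.Icc (-1 : ℝ) 1)
    {x'' : Fin m → ℝ} (hx'' : x'' ∈ stdSimplex ℝ (Fin m)) {j : Fin n} (h : BRL u x'' = {j})
    {ε : ℝ} (hε : 0 < ε) :
    ∃ δ > 0, ∀ x ∈ stdSimplex ℝ (Fin m), (∀ k, (x ᵥ* u) k ≤ (x ᵥ* u) j + δ) →
      ∃ x' ∈ stdSimplex ℝ (Fin m), j ∈ BRL u x' ∧ (x ᵥ* u) j ≤ (x' ᵥ* u) j + ε := by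
  obtain ⟨μ, hμ, hgap⟩ := exists_pos_gap_of_BRL_eq_singleton h
  set s := min 1 (ε / 2)
  have hs : 0 < s := lt_min one_pos (half_pos hε)
  have hs1 : s ≤ 1 := min_le_left _ _
  refine ⟨s * μ, mul_pos hs hμ, fun x hx happrox => ⟨(1 - s) • x + s • x'',
    convex_stdSimplex ℝ (Fin m) hx hx'' (sub_nonneg.2 hs1) hs.le (sub_add_cancel 1 s), ?_⟩⟩
  have hmix : ∀ k, (((1 - s) • x + s • x'') ᵥ* u) k = (1 - s) * (x ᵥ* u) k + s * (x'' ᵥ* u) k :=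
    fun k => by
      simp only [vecMul, dotProduct, Pi.add_apply, Pi.smul_apply, smul_eq_mul, add_mul,
        Finset.sum_add_distrib, mul_assoc, ← Finset.mul_sum]
  refine ⟨mem_BRL_iff.2 fun k => ?_, ?_⟩
  · rcases eq_or_ne k j with rfl | hk
    · exact le_rfl
    have h1 := mul_le_mul_of_nonneg_left (happrox k) (sub_nonneg.2 hs1)
    have h2 := mul_le_mul_of_nonneg_left (hgap k hk) hs.le
    rw [hmix, hmix]
    nlinarith [mul_pos (mul_pos hs hs) hμ]
  · have hx1 := (vecMul_mem_Icc hu hx j).2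
    have hx''1 := (vecMul_mem_Icc hu hx'' j).1
    have : s * ((x ᵥ* u) j - (x'' ᵥ* u) j) ≤ s * 2 :=
      mul_le_mul_of_nonneg_left (by linarith) hs.le
    rw [hmix]
    linarith [min_le_right 1 (ε / 2)]

end BestResponse

section TiltedOptimizer

variable {m n : ℕ} {u : Fin m → Fin n → ℝ}

lemma vecMul_le_VL_tiltToward {M : Set (Fin m × Fin n → ℝ)} (hM : IsMenu M) (hNR : M ⊆ MNR u)
    {A : ℝ} (hA : 0 ≤ A) {x : Fin m → ℝ} (hx : x ∈ stdSimplex ℝ (Fin m)) {j : Fin n}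
    (hj : j ∈ BRL u x) : (x ᵥ* u) j ≤ VL u (tiltToward u A j) M := by
  obtain ⟨y, hy, hxy⟩ := hM.2.2.2 x hx
  obtain ⟨ψ, hψ, hmax⟩ := hM.isCompact.exists_isMaxOn ⟨_, hxy⟩
    (continuous_linCSP (tiltToward u A j)).continuousOn
  have hregret_xy : regret u (prodCSP x y) j = 0 :=
    le_antisymm (sub_nonpos.2 ((hNR hxy).2 j)) (regret_prodCSP_nonneg hy hj)
  have hregret_ψ : regret u ψ j ≤ 0 := sub_nonpos.2 ((hNR hψ).2 j)
  have hval_xy : linCSP (tiltToward u A j) (prodCSP x y) = (x ᵥ* u) j := by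
    rw [linCSP_tiltToward, hregret_xy, mul_zero, zero_add]
    rw [regret, devCSP_prodCSP u x hy.2] at hregret_xy
    linarith
  calc (x ᵥ* u) j = linCSP (tiltToward u A j) (prodCSP x y) := hval_xy.symm
    _ ≤ linCSP (tiltToward u A j) ψ := hmax hxy
    _ = A * regret u ψ j + linCSP u ψ := linCSP_tiltToward u A j ψ
    _ ≤ linCSP u ψ := add_le_of_nonpos_left (mul_nonpos_of_nonneg_of_nonpos hA hregret_ψ)
    _ ≤ VL u (tiltToward u A j) M := le_VL hM.isCompact hψ fun φ hφ => hmax hφ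

lemma regret_sub_le_of_linCSP_tiltToward_le (hu : ∀ i j, u i j ∈ Set.Icc (-1 : ℝ) 1)
    {φs φ : Fin m × Fin n → ℝ} (hφs : φs ∈ stdSimplex ℝ (Fin m × Fin n))
    (hφ : φ ∈ stdSimplex ℝ (Fin m × Fin n)) {δ : ℝ} (hδ : 0 < δ) {j : Fin n}
    (h : linCSP (tiltToward u (2 / δ) j) φs ≤ linCSP (tiltToward u (2 / δ) j) φ) :
    regret u φs j - δ ≤ regret u φ j := by
  rw [linCSP_tiltToward, linCSP_tiltToward] at h
  have hφs1 := (linCSP_mem_Icc hu hφs).1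
  have hφ1 := (linCSP_mem_Icc hu hφ).2
  have : 2 / δ * (regret u φs j - regret u φ j) ≤ 2 / δ * δ := by
    rw [div_mul_cancel₀ 2 hδ.ne']
    linarith
  linarith [le_of_mul_le_mul_left this (by positivity)]

lemma VL_tiltToward_le (hu : ∀ i j, u i j ∈ Set.Icc (-1 : ℝ) 1) {M : Set (Fin m × Fin n → ℝ)}
    (hM : IsMenu M) {j : Fin n} {φs : Fin m × Fin n → ℝ} (hφs : φs ∈ M)
    (hmax : ∀ φ ∈ M, ∀ k, regret u φ k ≤ regret u φs j) {δ c : ℝ} (hδ : 0 < δ)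
    (hnear : ∀ x ∈ stdSimplex ℝ (Fin m), (∀ k, (x ᵥ* u) k ≤ (x ᵥ* u) j + δ) → (x ᵥ* u) j ≤ c) :
    VL u (tiltToward u (2 / δ) j) M ≤ c + δ - regret u φs j := by
  refine VL_le hM.isCompact ⟨φs, hφs⟩ fun φ hφ hφmax => ?_
  have hφ' := hM.2.2.1 hφ
  have hregret := regret_sub_le_of_linCSP_tiltToward_le hu (hM.2.2.1 hφs) hφ' hδ (hφmax φs hφs)
  have happrox : ∀ k, (marginal φ ᵥ* u) k ≤ (marginal φ ᵥ* u) j + δ := fun k => by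
    linarith [regret_sub_regret u φ k j, hmax φ hφ k]
  have hval := hnear _ (marginal_mem_stdSimplex hφ') happrox
  have hlin : linCSP u φ = (marginal φ ᵥ* u) j - regret u φ j := by
    rw [regret, devCSP_eq_vecMul_marginal]
    ring
  linarith

end TiltedOptimizer

theorem high_regret_menu_does_not_dominate_no_regret_menu_general
    (m n : ℕ)
    (uL : Fin m → Fin n → ℝ) (hbound : ∀ i j, uL i j ∈ Set.Icc (-1 : ℝ) 1)
    (hA2 : A2cond uL)
    (M1 M2 : Set (Fin m × Fin n → ℝ))
    (hM1 : IsMenu M1) (h1sub : M1 ⊆ MNR uL)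
    (hM2 : IsMenu M2) (h2nsub : ¬ M2 ⊆ MNR uL) :
    ¬ ParetoDominates uL M2 M1 := by
  rintro ⟨hweak, -⟩
  obtain ⟨j, φs, hφs, hρ, hmax⟩ := exists_max_regret hM2.isCompact hM2.2.2.1 h2nsub
  set ρ := regret uL φs j
  have hBR : j ∈ BRL uL (marginal φs) := mem_BRL_iff.2 fun k => by
    linarith [regret_sub_regret uL φs k j, hmax φs hφs k]
  obtain ⟨x'', hx'', hBR''⟩ := hA2 j ⟨_, marginal_mem_stdSimplex (hM2.2.2.1 hφs), hBR⟩
  obtain ⟨δ, hδ, hnear⟩ := exists_mem_BRL_near_of_approx hbound hx'' hBR'' (ε := ρ / 4)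
    (by positivity)
  set δ' := min δ (ρ / 4)
  have hδ' : 0 < δ' := lt_min hδ (by positivity)
  set uO := tiltToward uL (2 / δ') j
  have hM2val : VL uL uO M2 ≤ VL uL uO M1 + ρ / 4 + δ' - ρ := by
    refine VL_tiltToward_le hbound hM2 hφs hmax hδ' fun x hx happrox => ?_
    obtain ⟨x', hx', hBR', hclose⟩ :=
      hnear x hx fun k => (happrox k).trans (by gcongr; exact min_le_left _ _)
    linarith [vecMul_le_VL_tiltToward hM1 h1sub (A := 2 / δ') (by positivity) hx' hBR']
  linarith [hweak uO, min_le_right δ (ρ / 4)]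

/-- Assume (A1) and (A2). A menu that is not contained in the no-regret menu
cannot Pareto-dominate a menu contained in the no-regret menu. -/
theorem high_regret_menu_does_not_dominate_no_regret_menu
    (m n : ℕ) (hm : 0 < m) (hn : 0 < n)
    (uL : Fin m → Fin n → ℝ) (hbound : ∀ i j, uL i j ∈ Set.Icc (-1 : ℝ) 1)
    (istar : Fin m) (jstar : Fin n)
    (hA1 : ∀ p : Fin m × Fin n, p ≠ (istar, jstar) → uL p.1 p.2 < uL istar jstar)
    (hA2 : A2cond uL)
    (M1 M2 : Set (Fin m × Fin n → ℝ))
    (hM1 : IsMenu M1) (h1sub : M1 ⊆ MNR uL)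
    (hM2 : IsMenu M2) (h2nsub : ¬ M2 ⊆ MNR uL) :
    ¬ ParetoDominates uL M2 M1 :=
  high_regret_menu_does_not_dominate_no_regret_menu_general m n uL hbound hA2 M1 M2 hM1 h1sub hM2
    h2nsub
end
end
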